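/- Let b, d : ℕ → ℝ be the rates of a solvable birth-death process with infinite state space ℕ (d polynomial of degree ≤ 2 with d(0)=0, b-d polynomial of degree ≤ 1, positivity of rates, summable invariant measure, strictly negative nonzero eigenvalues). Then either d(x) = c·x and b is a positive constant (immigration-death process), or d(x) = c·x and b(x) = β₁·x + β₀ with β₀, β₁ > 0 and β₁ < c (Meixner process). -/

import Mathlib

/-!
Write `d x = x (c + a x)` and `b x = d x + e₁ x + e₀`. The eigenvalue condition at `n + 1`
reads `(n + 1)(e₁ + a n) < 0`, which forces `a ≤ 0`, while positivity of
`d (n + 1) = (n + 1)(c + a (n + 1))` forces `a ≥ 0`. So `d x = c x`, and `b x = (c + e₁) x + e₀`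
has `e₀ = b 0 > 0`, slope `c + e₁ ≥ 0` by positivity of `b`, and slope `< c` because `e₁ < 0`
(the case `n = 0`).
-/

open Polynomial

theorem Polynomial.eval_eq_of_natDegree_le_two {R : Type*} [CommSemiring R] {p : R[X]}
    (hp : p.natDegree ≤ 2) (x : R) :
    p.eval x = p.coeff 0 + p.coeff 1 * x + p.coeff 2 * x ^ 2 := by
  rw [eval_eq_sum_range' (Nat.lt_succ_of_le hp)]
  simp [Finset.sum_range_succ]

theorem nonneg_of_forall_pos_add_mul_natCast {K : Type*} [Field K] [LinearOrder K]
    [IsStrictOrderedRing K] [Archimedean K] {a b : K} (h : ∀ n : ℕ, 0 < a + b * n) :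
    0 ≤ b := by
  by_contra! hb
  obtain ⟨n, hn⟩ := exists_nat_gt (a / -b)
  have := h n
  rw [div_lt_iff₀ (neg_pos.mpr hb)] at hn
  linarith

theorem exists_rates_eq_quadratic_of_natDegree_le (b d : ℕ → ℝ) (pb pd : ℝ[X])
    (hbe : ∀ x : ℕ, b x = pb.eval (x : ℝ)) (hde : ∀ x : ℕ, d x = pd.eval (x : ℝ))
    (hdeg_d : pd.natDegree ≤ 2) (hdeg_bd : (pb - pd).natDegree ≤ 1) (hd0 : d 0 = 0) :
    ∃ c a e₀ e₁ : ℝ, (∀ x : ℕ, d x = x * (c + a * x)) ∧ ∀ x : ℕ, b x = d x + e₁ * x + e₀ := by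
  have hpd := pd.eval_eq_of_natDegree_le_two hdeg_d
  have hpd0 : pd.coeff 0 = 0 := by simpa [hde, hpd] using hd0
  refine ⟨pd.coeff 1, pd.coeff 2, (pb - pd).coeff 0, (pb - pd).coeff 1,
    fun x => ?_, fun x => ?_⟩
  · rw [hde, hpd, hpd0]; ring
  · have hlin := congrArg (eval (x : ℝ)) (eq_X_add_C_of_natDegree_le_one hdeg_bd)
    simp only [eval_sub, eval_add, eval_mul, eval_C, eval_X] at hlin
    rw [hbe, hde]; linarith

theorem classification_solvable_bd_general (b d : ℕ → ℝ) (pb pd : Polynomial ℝ)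
    (hbe : ∀ x : ℕ, b x = pb.eval (x : ℝ)) (hde : ∀ x : ℕ, d x = pd.eval (x : ℝ))
    (hdeg_d : pd.natDegree ≤ 2) (hdeg_bd : (pb - pd).natDegree ≤ 1)
    (hd0 : d 0 = 0) (hb_pos : ∀ x : ℕ, 0 < b x) (hd_pos : ∀ x : ℕ, 0 < d (x + 1))
    (heig : ∀ n : ℕ, 1 ≤ n →
      (n : ℝ) * ((b 1 - d 1) - (b 0 - d 0))
        + (1 / 2) * (n : ℝ) * ((n : ℝ) - 1) * (d 2 - 2 * d 1 + d 0) < 0) :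
    (∃ c b₀ : ℝ, 0 < c ∧ 0 < b₀ ∧ (∀ x : ℕ, d x = c * (x : ℝ)) ∧ ∀ x : ℕ, b x = b₀) ∨
    (∃ c β₀ β₁ : ℝ, 0 < c ∧ 0 < β₀ ∧ 0 < β₁ ∧ β₁ < c ∧
      (∀ x : ℕ, d x = c * (x : ℝ)) ∧ ∀ x : ℕ, b x = β₁ * (x : ℝ) + β₀) := by
  obtain ⟨c, a, e₀, e₁, hd, hb⟩ :=
    exists_rates_eq_quadratic_of_natDegree_le b d pb pd hbe hde hdeg_d hdeg_bd hd0
  have hn_pos (n : ℕ) : (0 : ℝ) < n + 1 := n.cast_add_one_pos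
  have heig_succ (n : ℕ) : ((n : ℝ) + 1) * (e₁ + a * n) < 0 := by
    have := heig (n + 1) n.succ_pos
    simp only [hb, hd] at this
    push_cast at this
    linear_combination this
  have ha_nonpos : a ≤ 0 := neg_nonneg.mp <| nonneg_of_forall_pos_add_mul_natCast (a := -e₁)
    fun n => by linarith [neg_of_mul_neg_right (heig_succ n) (hn_pos n).le]
  have ha_nonneg : 0 ≤ a := nonneg_of_forall_pos_add_mul_natCast (a := c + a) fun n => by
    have := hd_pos n
    rw [hd] at this
    push_cast at this
    linarith [pos_of_mul_pos_right this (hn_pos n).le]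
  obtain rfl : a = 0 := le_antisymm ha_nonpos ha_nonneg
  have hd_lin (x : ℕ) : d x = c * x := by rw [hd]; ring
  have hb_lin (x : ℕ) : b x = (c + e₁) * x + e₀ := by rw [hb, hd_lin]; ring
  have hc : 0 < c := by simpa [hd_lin] using hd_pos 0
  have he₁ : e₁ < 0 := by simpa using heig_succ 0
  have he₀ : 0 < e₀ := by simpa [hb_lin] using hb_pos 0
  have hβ : 0 ≤ c + e₁ := nonneg_of_forall_pos_add_mul_natCast (a := e₀) fun n => by
    linarith [hb_lin n, hb_pos n]
  rcases hβ.eq_or_lt with hβ | hβ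
  · exact .inl ⟨c, e₀, hc, he₀, hd_lin, fun x => by rw [hb_lin, ← hβ]; ring⟩
  · exact .inr ⟨c, e₀, c + e₁, hc, he₀, hβ, by linarith, hd_lin, hb_lin⟩

/-- Classification of solvable birth-death processes with infinite state space ℕ:
either an immigration-death process or a Meixner process. -/
theorem classification_solvable_bd (b d : ℕ → ℝ) (pb pd : Polynomial ℝ)
    (hbe : ∀ x : ℕ, b x = pb.eval (x : ℝ)) (hde : ∀ x : ℕ, d x = pd.eval (x : ℝ))
    (hdeg_d : pd.natDegree ≤ 2) (hdeg_bd : (pb - pd).natDegree ≤ 1)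
    (hd0 : d 0 = 0) (hb_pos : ∀ x : ℕ, 0 < b x) (hd_pos : ∀ x : ℕ, 0 < d (x + 1))
    (hsum : Summable (fun x : ℕ => ∏ k ∈ Finset.range (x + 1), b k / d (k + 1)))
    (heig : ∀ n : ℕ, 1 ≤ n →
      (n : ℝ) * ((b 1 - d 1) - (b 0 - d 0))
        + (1 / 2) * (n : ℝ) * ((n : ℝ) - 1) * (d 2 - 2 * d 1 + d 0) < 0) :
    (∃ c b₀ : ℝ, 0 < c ∧ 0 < b₀ ∧ (∀ x : ℕ, d x = c * (x : ℝ)) ∧ ∀ x : ℕ, b x = b₀) ∨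
    (∃ c β₀ β₁ : ℝ, 0 < c ∧ 0 < β₀ ∧ 0 < β₁ ∧ β₁ < c ∧
      (∀ x : ℕ, d x = c * (x : ℝ)) ∧ ∀ x : ℕ, b x = β₁ * (x : ℝ) + β₀) :=
  classification_solvable_bd_general b d pb pd hbe hde hdeg_d hdeg_bd hd0 hb_pos hd_pos heig
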